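/- (Incremental edge-sensitivity of k-star counts.) Let k ≥ 1, D ∈ ℕ, and let f_kstars(S)_t denote the number of k-stars in flat(S_[t]), i.e., Σ_v C(deg(v), k) where the sum is over the vertices of flat(S_[t]). For every T ∈ ℕ and every pair of edge-neighboring insertion-only graph streams S, S' of length T whose flattened graphs flat(S_[T]) and flat(S'_[T]) have maximum degree at most D, the ℓ1 distance between the increment sequences satisfies Σ_{t=1}^{T} |inc_{f_kstars}(S)_t − inc_{f_kstars}(S')_t| ≤ 2·C(D−1, k−1); moreover, this bound is attained, even by a pair of such streams of length T = 1. -/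

import Mathlib

open Finset

/-- A finite graph: a finite vertex set together with a finite set of undirected edges. -/
structure FinGraph where
  verts : Finset ℕ
  edges : Finset (Sym2 ℕ)

namespace FinGraph

/-- A finite graph is valid if every edge is a non-loop both of whose endpoints are vertices. -/
def Valid (G : FinGraph) : Prop :=
  ∀ e ∈ G.edges, ¬ e.IsDiag ∧ ∀ v ∈ e, v ∈ G.verts

/-- The degree of a vertex: the number of edges containing it. -/
def degree (G : FinGraph) (v : ℕ) : ℕ :=
  (G.edges.filter (fun e => v ∈ e)).card

/-- Remove a node and all of its adjacent edges. -/
def removeNode (G : FinGraph) (v : ℕ) : FinGraph :=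
  ⟨G.verts.erase v, G.edges.filter (fun e => v ∉ e)⟩

/-- Remove a single edge. -/
def removeEdge (G : FinGraph) (e : Sym2 ℕ) : FinGraph :=
  ⟨G.verts, G.edges.erase e⟩

/-- `G` is `(D, ℓ)`-bounded: it has at most `ℓ` nodes of degree greater than `D`. -/
def DLBounded (G : FinGraph) (D ℓ : ℕ) : Prop :=
  (G.verts.filter (fun v => D < G.degree v)).card ≤ ℓ

end FinGraph

/-- One graph is obtained from the other by removing one node and all of its adjacent edges. -/
def nodeNeighborGraph (G G' : FinGraph) : Prop :=
  (∃ v ∈ G.verts, G' = G.removeNode v) ∨ (∃ v ∈ G'.verts, G = G'.removeNode v)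

/-- `G'` is obtained from `G` by removing a single edge, an isolated node,
or a degree-one node together with its adjacent edge. -/
def edgeRemovalGraph (G G' : FinGraph) : Prop :=
  (∃ e ∈ G.edges, G' = G.removeEdge e) ∨
  (∃ v ∈ G.verts, G.degree v = 0 ∧ G' = FinGraph.mk (G.verts.erase v) G.edges) ∨
  (∃ v ∈ G.verts, G.degree v = 1 ∧ G' = G.removeNode v)

/-- Edge-neighboring graphs. -/
def edgeNeighborGraph (G G' : FinGraph) : Prop :=
  edgeRemovalGraph G G' ∨ edgeRemovalGraph G' G

/-- The length of a shortest chain of valid graphs from `A` to `B` in which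
consecutive graphs are related by `R`. -/
noncomputable def graphChainDist (R : FinGraph → FinGraph → Prop) (A B : FinGraph) : ℕ :=
  sInf {n | ∃ f : ℕ → FinGraph, f 0 = A ∧ f n = B ∧ (∀ i ≤ n, (f i).Valid) ∧
    ∀ i < n, R (f i) (f (i + 1))}

/-- Node distance between finite graphs. -/
noncomputable def graphNodeDist : FinGraph → FinGraph → ℕ := graphChainDist nodeNeighborGraph

/-- Edge distance between finite graphs. -/
noncomputable def graphEdgeDist : FinGraph → FinGraph → ℕ := graphChainDist edgeNeighborGraph

/-- An insertion-only graph stream: the nodes and edges arriving at each time step. -/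
structure GraphStream where
  nodes : ℕ → Finset ℕ
  edges : ℕ → Finset (Sym2 ℕ)

namespace GraphStream

/-- Validity of a graph stream of length `T`: arrivals happen only at times `1, …, T`,
no node or edge arrives twice, and every edge is a non-loop whose endpoints
arrive at or before the edge does. -/
def Valid (T : ℕ) (S : GraphStream) : Prop :=
  (∀ t, ((S.nodes t).Nonempty ∨ (S.edges t).Nonempty) → 1 ≤ t ∧ t ≤ T) ∧
  (∀ s t, s ≠ t → Disjoint (S.nodes s) (S.nodes t)) ∧
  (∀ s t, s ≠ t → Disjoint (S.edges s) (S.edges t)) ∧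
  (∀ t, ∀ e ∈ S.edges t, ¬ e.IsDiag ∧ ∀ v ∈ e, ∃ s ≤ t, v ∈ S.nodes s)

/-- The flattened graph of the stream through time `t`. -/
def flat (S : GraphStream) (t : ℕ) : FinGraph :=
  ⟨(Finset.range (t + 1)).biUnion S.nodes, (Finset.range (t + 1)).biUnion S.edges⟩

/-- Remove a node and all of its adjacent edges from a stream. -/
def removeNode (S : GraphStream) (v : ℕ) : GraphStream :=
  ⟨fun t => (S.nodes t).erase v, fun t => (S.edges t).filter (fun e => v ∉ e)⟩

/-- Remove a single edge from a stream. -/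
def removeEdge (S : GraphStream) (e : Sym2 ℕ) : GraphStream :=
  ⟨S.nodes, fun t => (S.edges t).erase e⟩

/-- Truncation of a stream: keep only arrivals at times `≤ t`. -/
def trunc (S : GraphStream) (t : ℕ) : GraphStream :=
  ⟨fun s => if s ≤ t then S.nodes s else ∅, fun s => if s ≤ t then S.edges s else ∅⟩

/-- `v` arrives at some point in the stream. -/
def hasNode (S : GraphStream) (v : ℕ) : Prop :=
  ∃ t, v ∈ S.nodes t

/-- The stream is `(D, ℓ)`-bounded through time `t`. -/
def DLBoundedThrough (S : GraphStream) (D ℓ t : ℕ) : Prop :=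
  (S.flat t).DLBounded D ℓ

end GraphStream

/-- `S'` is obtained from `S` by removing one node and all of its adjacent edges
(which may arrive at many time steps). -/
def nodeRemovalStream (S S' : GraphStream) : Prop :=
  ∃ v, S.hasNode v ∧ S' = S.removeNode v

/-- Node-neighboring streams. -/
def nodeNeighborStream (S S' : GraphStream) : Prop :=
  nodeRemovalStream S S' ∨ nodeRemovalStream S' S

/-- `S'` is obtained from the length-`T` stream `S` by removing a single edge,
an isolated node, or a degree-one node together with its adjacent edge. -/
def edgeRemovalStream (T : ℕ) (S S' : GraphStream) : Prop :=
  (∃ t, ∃ e ∈ S.edges t, S' = S.removeEdge e) ∨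
  (∃ v, S.hasNode v ∧ (S.flat T).degree v ≤ 1 ∧ S' = S.removeNode v)

/-- Edge-neighboring streams (of length `T`). -/
def edgeNeighborStream (T : ℕ) (S S' : GraphStream) : Prop :=
  edgeRemovalStream T S S' ∨ edgeRemovalStream T S' S

/-- Length of a shortest chain of valid streams of length `T` in which consecutive
streams are related by `R`. -/
noncomputable def streamChainDist (T : ℕ) (R : GraphStream → GraphStream → Prop)
    (A B : GraphStream) : ℕ :=
  sInf {n | ∃ f : ℕ → GraphStream, f 0 = A ∧ f n = B ∧ (∀ i ≤ n, (f i).Valid T) ∧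
    ∀ i < n, R (f i) (f (i + 1))}

/-- Node distance between streams of length `T`. -/
noncomputable def streamNodeDist (T : ℕ) : GraphStream → GraphStream → ℕ :=
  streamChainDist T nodeNeighborStream

/-- Edge distance between streams of length `T`. -/
noncomputable def streamEdgeDist (T : ℕ) : GraphStream → GraphStream → ℕ :=
  streamChainDist T (edgeNeighborStream T)

/-- A fixed injective key on undirected edges, providing the consistent total order in
which edges arriving at the same time step are processed. -/
def edgeKey : Sym2 ℕ → ℕ :=
  Sym2.lift ⟨fun a b => Nat.pair (min a b) (max a b), fun a b => by
    dsimp only; rw [inf_comm, sup_comm]⟩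

/-- The two endpoints of an edge, as an ordered pair. -/
def endpointsOf (e : Sym2 ℕ) : ℕ × ℕ := (edgeKey e).unpair

/-- The edges of a finite edge set, listed in increasing `edgeKey` order. -/
def sortEdges (E : Finset (Sym2 ℕ)) : List (Sym2 ℕ) :=
  ((E.image edgeKey).sort (· ≤ ·)).map fun k => s(k.unpair.1, k.unpair.2)

/-- All edges of a stream of length `T`, tagged with their arrival times, in processing
order: lexicographically by (arrival time, consistent edge order). -/
def GraphStream.procList (S : GraphStream) (T : ℕ) : List (ℕ × Sym2 ℕ) :=
  (List.range (T + 1)).flatMap fun t => (sortEdges (S.edges t)).map fun e => (t, e)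

/-- One step of the greedy projection with degree bound `D`.  The state consists of the
degree counters together with the edges kept so far (indexed by arrival time).
If `bbds = true` the counters of the endpoints are incremented for every processed edge
(the BBDS rule); if `bbds = false` they are incremented only when the edge is kept
(the DLL rule). -/
def projStep (D : ℕ) (bbds : Bool) (st : (ℕ → ℕ) × (ℕ → Finset (Sym2 ℕ)))
    (p : ℕ × Sym2 ℕ) : (ℕ → ℕ) × (ℕ → Finset (Sym2 ℕ)) :=
  let d := st.1
  let u := (endpointsOf p.2).1
  let v := (endpointsOf p.2).2
  let keep : Bool := decide (d u < D ∧ d v < D)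
  ((if bbds || keep then fun w => if w = u ∨ w = v then d w + 1 else d w else d),
   (if keep then fun s => if s = p.1 then insert p.2 (st.2 s) else st.2 s else st.2))

/-- The time-aware projection with degree bound `D` on streams of length `T`:
the BBDS projection if `bbds = true` and the DLL projection if `bbds = false`.
All arriving nodes are kept; an arriving edge is kept (at its arrival time) iff both of
its endpoints have counter value `< D` when the edge is processed. -/
def project (bbds : Bool) (D T : ℕ) (S : GraphStream) : GraphStream :=
  ⟨S.nodes,
   ((S.procList T).foldl (projStep D bbds)
      ((fun _ => 0 : ℕ → ℕ), (fun _ => ∅ : ℕ → Finset (Sym2 ℕ)))).2⟩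

/-- The BBDS projection `Π^BBDS_D` on streams of length `T`. -/
def projBBDS (D T : ℕ) : GraphStream → GraphStream := project true D T

/-- The DLL projection `Π^DLL_D` on streams of length `T`. -/
def projDLL (D T : ℕ) : GraphStream → GraphStream := project false D T

/-- The number of `k`-stars of a finite graph: `∑_v C(deg v, k)`. -/
def FinGraph.kstarCount (G : FinGraph) (k : ℕ) : ℕ :=
  ∑ v ∈ G.verts, (G.degree v).choose k

/-! Removing an edge `ab` from a graph destroys exactly the
`C(deg a - 1, k - 1) + C(deg b - 1, k - 1)` `k`-stars through it, and removing a node of degree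
at most one destroys the same stars as removing its edge (an isolated node lies in no `k`-star).
Hence for edge-neighbouring streams the difference of the star counts at time `t` is this loss
for one fixed edge: it is `0` at time `0` and nondecreasing in `t`, because degrees only grow.
The increments of the difference are therefore nonnegative and telescope to the loss at time
`T`, which is at most `2 * C(D - 1, k - 1)` when all degrees are at most `D`. Two adjacent
centres of degree `D` (a double star) with their common edge removed attain the bound. -/

namespace FinGraph

variable {G : FinGraph} {e : Sym2 ℕ} {v : ℕ} {k : ℕ}

lemma degree_le_of_edges_subset {H : FinGraph} (h : G.edges ⊆ H.edges) (v : ℕ) :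
    G.degree v ≤ H.degree v :=
  card_le_card (filter_subset_filter _ h)

lemma degree_removeEdge (G : FinGraph) (e : Sym2 ℕ) (v : ℕ) :
    (G.removeEdge e).degree v = ((G.edges.filter (v ∈ ·)).erase e).card := by
  unfold removeEdge degree
  rw [filter_erase]

lemma degree_removeEdge_of_notMem (G : FinGraph) (h : v ∉ e) :
    (G.removeEdge e).degree v = G.degree v := by
  have : e ∉ G.edges.filter (v ∈ ·) := fun he => h (mem_filter.1 he).2
  rw [degree_removeEdge, erase_eq_of_notMem this, degree]

lemma degree_removeEdge_of_mem (he : e ∈ G.edges) (h : v ∈ e) :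
    (G.removeEdge e).degree v = G.degree v - 1 := by
  rw [degree_removeEdge, card_erase_of_mem (mem_filter.2 ⟨he, h⟩), degree]

lemma one_le_degree_of_mem (he : e ∈ G.edges) (h : v ∈ e) : 1 ≤ G.degree v :=
  card_pos.2 ⟨e, mem_filter.2 ⟨he, h⟩⟩

lemma kstarCount_eq_kstarCount_removeEdge_add {a b : ℕ} (hab : a ≠ b)
    (he : s(a, b) ∈ G.edges) (ha : a ∈ G.verts) (hb : b ∈ G.verts) (hk : 1 ≤ k) :
    G.kstarCount k = (G.removeEdge s(a, b)).kstarCount k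
      + (G.degree a - 1).choose (k - 1) + (G.degree b - 1).choose (k - 1) := by
  have hb' : b ∈ G.verts.erase a := mem_erase.2 ⟨hab.symm, hb⟩
  have split (f : ℕ → ℕ) :
      ∑ v ∈ G.verts, f v = ∑ v ∈ (G.verts.erase a).erase b, f v + f b + f a := by
    rw [← sum_erase_add _ f ha, ← sum_erase_add _ f hb']
  have away : ∑ v ∈ (G.verts.erase a).erase b, ((G.removeEdge s(a, b)).degree v).choose k
      = ∑ v ∈ (G.verts.erase a).erase b, (G.degree v).choose k := by
    refine sum_congr rfl fun v hv => ?_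
    obtain ⟨hvb, hva, -⟩ := by simpa only [mem_erase] using hv
    rw [degree_removeEdge_of_notMem G (by simp [hva, hvb])]
  unfold kstarCount
  rw [show (G.removeEdge s(a, b)).verts = G.verts from rfl, split, split, away,
    degree_removeEdge_of_mem he (Sym2.mem_mk_left a b),
    degree_removeEdge_of_mem he (Sym2.mem_mk_right a b),
    Nat.choose_eq_choose_pred_add (one_le_degree_of_mem he (Sym2.mem_mk_left a b)) hk,
    Nat.choose_eq_choose_pred_add (one_le_degree_of_mem he (Sym2.mem_mk_right a b)) hk]
  ring

lemma kstarCount_erase_of_degree_eq_zero (hv : G.degree v = 0) (hk : 1 ≤ k) :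
    (⟨G.verts.erase v, G.edges⟩ : FinGraph).kstarCount k = G.kstarCount k :=
  sum_erase _ <| by change (G.degree v).choose k = 0; rw [hv, Nat.choose_eq_zero_of_lt hk]

lemma kstarCount_removeNode_eq_removeEdge (hve : v ∈ e)
    (hunique : ∀ f ∈ G.edges, v ∈ f → f = e) (hk : 1 ≤ k) :
    (G.removeNode v).kstarCount k = (G.removeEdge e).kstarCount k := by
  have hedges : G.edges.filter (v ∉ ·) = G.edges.erase e := by
    ext f
    simp only [mem_filter, mem_erase]
    exact ⟨fun ⟨hf, hvf⟩ => ⟨fun hfe => hvf (hfe ▸ hve), hf⟩,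
      fun ⟨hfe, hf⟩ => ⟨hf, fun hvf => hfe (hunique f hf hvf)⟩⟩
  have hv : (G.removeEdge e).degree v = 0 := by
    rw [degree_removeEdge, card_eq_zero, eq_empty_iff_forall_notMem]
    intro f hf
    obtain ⟨hfe, hf, hvf⟩ := by simpa only [mem_erase, mem_filter] using hf
    exact hfe (hunique f hf hvf)
  rw [← kstarCount_erase_of_degree_eq_zero hv hk]
  simp only [removeNode, removeEdge, hedges]

lemma exists_mem_forall_eq_of_degree_le_one (hv : G.degree v ≤ 1) :
    ∃ e, v ∈ e ∧ ∀ f ∈ G.edges, v ∈ f → f = e := by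
  have hmem {f} (hf : f ∈ G.edges) (hvf : v ∈ f) : f ∈ G.edges.filter (v ∈ ·) :=
    mem_filter.2 ⟨hf, hvf⟩
  rcases (G.edges.filter (v ∈ ·)).eq_empty_or_nonempty with h0 | ⟨e, he⟩
  -- `v` is isolated: any edge through `v`, such as the loop, will do
  · refine ⟨s(v, v), Sym2.mem_mk_left v v, fun f hf hvf => ?_⟩
    simpa [h0] using hmem hf hvf
  · exact ⟨e, (mem_filter.1 he).2, fun f hf hvf => card_le_one.1 hv f (hmem hf hvf) e he⟩

end FinGraph

lemma Monotone.sum_Icc_abs_sub_pred {F : ℕ → ℤ} (hF : Monotone F) (T : ℕ) :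
    ∑ t ∈ Icc 1 T, |F t - F (t - 1)| = F T - F 0 := by
  induction T with
  | zero => simp
  | succ n ih =>
    rw [sum_Icc_succ_top (by omega), ih, Nat.add_sub_cancel,
      abs_of_nonneg (sub_nonneg.2 (hF n.le_succ))]
    ring

namespace GraphStream

variable {S S' : GraphStream} {T k D : ℕ} {e : Sym2 ℕ}

lemma flat_removeEdge (S : GraphStream) (e : Sym2 ℕ) (t : ℕ) :
    (S.removeEdge e).flat t = (S.flat t).removeEdge e := by
  simp only [flat, removeEdge, FinGraph.removeEdge, FinGraph.mk.injEq, true_and]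
  ext f
  simp only [mem_biUnion, mem_erase]
  tauto

lemma degree_flat_removeEdge_le (S : GraphStream) (e : Sym2 ℕ) (t v : ℕ) :
    ((S.removeEdge e).flat t).degree v ≤ (S.flat t).degree v := by
  rw [flat_removeEdge]
  exact FinGraph.degree_le_of_edges_subset (erase_subset _ _) v

lemma flat_removeNode (S : GraphStream) (v t : ℕ) :
    (S.removeNode v).flat t = (S.flat t).removeNode v := by
  simp only [flat, removeNode, FinGraph.removeNode, FinGraph.mk.injEq]
  constructor <;> ext <;> simp only [mem_biUnion, mem_erase, mem_filter] <;> tauto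

lemma monotone_flat_edges (S : GraphStream) : Monotone fun t => (S.flat t).edges :=
  fun _ _ h => biUnion_subset_biUnion_of_subset_left _ (range_subset_range.2 (by omega))

lemma Valid.flat_zero_edges (hS : S.Valid T) : (S.flat 0).edges = ∅ := by
  simp only [flat, zero_add, range_one, singleton_biUnion]
  exact not_nonempty_iff_eq_empty.1 fun h => by simpa using hS.1 0 (Or.inr h)

lemma Valid.not_isDiag_of_mem_flat {t : ℕ} (hS : S.Valid T) (he : e ∈ (S.flat t).edges) :
    ¬ e.IsDiag := by
  obtain ⟨s, -, hes⟩ := mem_biUnion.1 he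
  exact (hS.2.2.2 s e hes).1

lemma Valid.mem_flat_verts {t v : ℕ} (hS : S.Valid T) (he : e ∈ (S.flat t).edges)
    (hv : v ∈ e) : v ∈ (S.flat t).verts := by
  obtain ⟨s, hs, hes⟩ := mem_biUnion.1 he
  obtain ⟨r, hr, hvr⟩ := (hS.2.2.2 s e hes).2 v hv
  exact mem_biUnion.2 ⟨r, mem_range.2 (by rw [mem_range] at hs; omega), hvr⟩

lemma Valid.removeEdge (hS : S.Valid T) (e : Sym2 ℕ) : (S.removeEdge e).Valid T := by
  obtain ⟨hT, hnodes, hedges, hends⟩ := hS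
  refine ⟨fun t ht => hT t (ht.imp id (Nonempty.mono (erase_subset _ _))), hnodes,
    fun s t hst => (hedges s t hst).mono (erase_subset _ _) (erase_subset _ _),
    fun t f hf => hends t f (mem_of_mem_erase hf)⟩

/-- The number of `k`-stars of the graph at time `t` that contain the edge `e`. -/
def kstarLoss (S : GraphStream) (e : Sym2 ℕ) (k t : ℕ) : ℤ :=
  ((S.flat t).kstarCount k : ℤ) - (((S.flat t).removeEdge e).kstarCount k : ℤ)

lemma kstarLoss_of_notMem {t : ℕ} (he : e ∉ (S.flat t).edges) : S.kstarLoss e k t = 0 := by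
  rw [kstarLoss, FinGraph.removeEdge, erase_eq_of_notMem he, sub_self]

lemma Valid.kstarLoss_of_mem {a b t : ℕ} (hS : S.Valid T) (hk : 1 ≤ k)
    (he : s(a, b) ∈ (S.flat t).edges) :
    S.kstarLoss s(a, b) k t = (((S.flat t).degree a - 1).choose (k - 1)
      + ((S.flat t).degree b - 1).choose (k - 1) : ℕ) := by
  have hab : a ≠ b := fun h => hS.not_isDiag_of_mem_flat he (Sym2.mk_isDiag_iff.2 h)
  rw [kstarLoss, FinGraph.kstarCount_eq_kstarCount_removeEdge_add hab he
    (hS.mem_flat_verts he (Sym2.mem_mk_left a b))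
    (hS.mem_flat_verts he (Sym2.mem_mk_right a b)) hk]
  push_cast
  ring

lemma Valid.kstarLoss_zero (hS : S.Valid T) : S.kstarLoss e k 0 = 0 :=
  kstarLoss_of_notMem (by simp [hS.flat_zero_edges])

lemma Valid.monotone_kstarLoss (hS : S.Valid T) (hk : 1 ≤ k) : Monotone (S.kstarLoss e k) := by
  intro t t' htt'
  induction e using Sym2.ind with
  | _ a b =>
  by_cases he : s(a, b) ∈ (S.flat t).edges
  · have hsub := S.monotone_flat_edges htt'
    have hdeg (v : ℕ) := FinGraph.degree_le_of_edges_subset hsub v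
    rw [hS.kstarLoss_of_mem hk he, hS.kstarLoss_of_mem hk (hsub he)]
    gcongr <;> apply hdeg
  · rw [kstarLoss_of_notMem he]
    by_cases he' : s(a, b) ∈ (S.flat t').edges
    · rw [hS.kstarLoss_of_mem hk he']
      positivity
    · rw [kstarLoss_of_notMem he']

lemma Valid.kstarLoss_le {t : ℕ} (hS : S.Valid T) (hk : 1 ≤ k)
    (hD : ∀ v, (S.flat t).degree v ≤ D) :
    S.kstarLoss e k t ≤ 2 * ((D - 1).choose (k - 1) : ℤ) := by
  induction e using Sym2.ind with
  | _ a b =>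
  by_cases he : s(a, b) ∈ (S.flat t).edges
  · rw [hS.kstarLoss_of_mem hk he, two_mul]
    have hchoose (v : ℕ) : ((S.flat t).degree v - 1).choose (k - 1) ≤ (D - 1).choose (k - 1) :=
      Nat.choose_le_choose _ (by have := hD v; omega)
    exact_mod_cast add_le_add (hchoose a) (hchoose b)
  · rw [kstarLoss_of_notMem he]
    positivity

/-- The `ℓ₁` distance between the increment sequences of a statistic `f` on two streams. -/
def incrementDist (f : FinGraph → ℤ) (T : ℕ) (S S' : GraphStream) : ℤ :=
  ∑ t ∈ Icc 1 T, |(f (S.flat t) - f (S.flat (t - 1))) - (f (S'.flat t) - f (S'.flat (t - 1)))|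

lemma incrementDist_comm (f : FinGraph → ℤ) (T : ℕ) (S S' : GraphStream) :
    incrementDist f T S S' = incrementDist f T S' S :=
  sum_congr rfl fun _ _ => abs_sub_comm _ _

lemma Valid.incrementDist_kstarCount_eq_kstarLoss (hS : S.Valid T) (hk : 1 ≤ k)
    (hkstar : ∀ t ≤ T, (S'.flat t).kstarCount k = ((S.flat t).removeEdge e).kstarCount k) :
    incrementDist (fun G => G.kstarCount k) T S S' = S.kstarLoss e k T := by
  have hinc : ∀ t ∈ Icc 1 T, |((S.flat t).kstarCount k - (S.flat (t - 1)).kstarCount k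
        - ((S'.flat t).kstarCount k - (S'.flat (t - 1)).kstarCount k) : ℤ)|
      = |S.kstarLoss e k t - S.kstarLoss e k (t - 1)| := by
    intro t ht
    rw [mem_Icc] at ht
    rw [kstarLoss, kstarLoss, hkstar t ht.2, hkstar (t - 1) (by omega)]
    ring_nf
  rw [incrementDist, sum_congr rfl hinc, (hS.monotone_kstarLoss hk).sum_Icc_abs_sub_pred,
    hS.kstarLoss_zero, sub_zero]

lemma exists_kstarCount_eq_removeEdge (h : edgeRemovalStream T S S') (hk : 1 ≤ k) :
    ∃ e, ∀ t ≤ T, (S'.flat t).kstarCount k = ((S.flat t).removeEdge e).kstarCount k := by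
  rcases h with ⟨-, e, -, rfl⟩ | ⟨v, -, hv, rfl⟩
  · exact ⟨e, fun t _ => by rw [flat_removeEdge]⟩
  obtain ⟨e, hve, hunique⟩ := FinGraph.exists_mem_forall_eq_of_degree_le_one hv
  refine ⟨e, fun t ht => ?_⟩
  rw [flat_removeNode]
  exact FinGraph.kstarCount_removeNode_eq_removeEdge hve
    (fun f hf => hunique f (S.monotone_flat_edges ht hf)) hk

lemma incrementDist_kstarCount_le (hS : S.Valid T) (hS' : S'.Valid T)
    (h : edgeNeighborStream T S S') (hk : 1 ≤ k)
    (hdS : ∀ v, (S.flat T).degree v ≤ D) (hdS' : ∀ v, (S'.flat T).degree v ≤ D) :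
    incrementDist (fun G => G.kstarCount k) T S S' ≤ 2 * ((D - 1).choose (k - 1) : ℤ) := by
  wlog hrem : edgeRemovalStream T S S' generalizing S S'
  · rw [incrementDist_comm]
    exact this hS' hS (Or.symm h) hdS' hdS (h.resolve_left hrem)
  obtain ⟨e, he⟩ := exists_kstarCount_eq_removeEdge hrem hk
  rw [hS.incrementDist_kstarCount_eq_kstarLoss hk he]
  exact hS.kstarLoss_le hk hdS

/-- The double star: two adjacent centres `0` and `1`; every other vertex `w < 2 * D` is a
leaf, hanging from `0` if `w ≤ D` and from `1` otherwise, so both centres have degree `D`. -/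
def doubleStar (D : ℕ) : GraphStream :=
  ⟨fun t => if t = 1 then range (2 * D) else ∅,
   fun t => if t = 1 then (Ico 1 (2 * D)).image (fun w => s(if w ≤ D then 0 else 1, w))
     else ∅⟩

lemma doubleStar_flat_one (D : ℕ) : (doubleStar D).flat 1 =
    ⟨range (2 * D), (Ico 1 (2 * D)).image (fun w => s(if w ≤ D then 0 else 1, w))⟩ := by
  simp [flat, doubleStar, range_add_one]

lemma doubleStar_degree (D v : ℕ) : ((doubleStar D).flat 1).degree v =
    #{w ∈ Ico 1 (2 * D) | v = w ∨ v = if w ≤ D then 0 else 1} := by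
  rw [doubleStar_flat_one, FinGraph.degree, filter_image, card_image_of_injOn]
  · congr 1
    ext w
    simp only [mem_filter, Sym2.mem_iff]
    tauto
  · intro w hw w' hw' h
    simp only [coe_filter, mem_Ico, Set.mem_ofPred_eq] at hw hw'
    simp only [Sym2.eq_iff] at h
    split_ifs at h <;> omega

lemma doubleStar_degree_zero (hD : 1 ≤ D) : ((doubleStar D).flat 1).degree 0 = D := by
  rw [doubleStar_degree,
    show {w ∈ Ico 1 (2 * D) | 0 = w ∨ 0 = if w ≤ D then 0 else 1} = Icc 1 D by
      ext w; simp only [mem_filter, mem_Ico, mem_Icc]; grind,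
    Nat.card_Icc, Nat.add_sub_cancel]

lemma doubleStar_degree_one (hD : 1 ≤ D) : ((doubleStar D).flat 1).degree 1 = D := by
  rw [doubleStar_degree, show {w ∈ Ico 1 (2 * D) | 1 = w ∨ 1 = if w ≤ D then 0 else 1}
      = insert 1 (Ioo D (2 * D)) by
    ext w; simp only [mem_filter, mem_Ico, mem_insert, mem_Ioo]; grind,
    card_insert_of_notMem (by rw [mem_Ioo]; omega), Nat.card_Ioo]
  omega

lemma doubleStar_degree_le (hD : 1 ≤ D) (v : ℕ) : ((doubleStar D).flat 1).degree v ≤ D := by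
  rcases Nat.lt_or_ge v 2 with hv | hv
  · interval_cases v
    exacts [(doubleStar_degree_zero hD).le, (doubleStar_degree_one hD).le]
  rw [doubleStar_degree]
  calc #{w ∈ Ico 1 (2 * D) | v = w ∨ v = if w ≤ D then 0 else 1} ≤ #{v} :=
        card_le_card fun w hw => by
          simp only [mem_filter, mem_singleton] at hw ⊢; grind
    _ ≤ D := by simpa

lemma doubleStar_valid (D : ℕ) : (doubleStar D).Valid 1 := by
  refine ⟨fun t ht => ?_, fun s t hst => ?_, fun s t hst => ?_, fun t e he => ?_⟩
  · by_contra h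
    rcases ht with ⟨_, hx⟩ | ⟨_, hx⟩ <;> simp [doubleStar, show t ≠ 1 by omega] at hx
  · by_cases hs : s = 1 <;> by_cases ht : t = 1 <;> simp_all [doubleStar]
  · by_cases hs : s = 1 <;> by_cases ht : t = 1 <;> simp_all [doubleStar]
  · by_cases ht : t = 1
    · subst ht
      simp only [doubleStar, if_true, mem_image, mem_Ico] at he
      obtain ⟨w, hw, rfl⟩ := he
      refine ⟨by rw [Sym2.mk_isDiag_iff]; split_ifs <;> omega, fun v hv => ⟨1, le_rfl, ?_⟩⟩
      simp only [doubleStar, if_true, mem_range]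
      rw [Sym2.mem_iff] at hv
      split_ifs at hv <;> omega
    · simp [doubleStar, ht] at he

lemma center_mem_doubleStar_edges (hD : 1 ≤ D) : s(0, 1) ∈ (doubleStar D).edges 1 := by
  simp only [doubleStar, if_true]
  exact mem_image.2 ⟨1, mem_Ico.2 ⟨le_rfl, by omega⟩, by simp [hD]⟩

lemma doubleStar_kstarLoss (hD : 1 ≤ D) (hk : 1 ≤ k) :
    (doubleStar D).kstarLoss s(0, 1) k 1 = 2 * ((D - 1).choose (k - 1) : ℤ) := by
  have he : s(0, 1) ∈ ((doubleStar D).flat 1).edges :=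
    mem_biUnion.2 ⟨1, by simp, center_mem_doubleStar_edges hD⟩
  rw [(doubleStar_valid D).kstarLoss_of_mem hk he, doubleStar_degree_zero hD,
    doubleStar_degree_one hD]
  push_cast
  ring

lemma incrementDist_kstarCount_doubleStar (hD : 1 ≤ D) (hk : 1 ≤ k) :
    incrementDist (fun G => G.kstarCount k) 1 (doubleStar D)
      ((doubleStar D).removeEdge s(0, 1)) = 2 * ((D - 1).choose (k - 1) : ℤ) := by
  rw [(doubleStar_valid D).incrementDist_kstarCount_eq_kstarLoss hk
    fun t _ => by rw [flat_removeEdge], doubleStar_kstarLoss hD hk]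

end GraphStream

/-- incremental edge-sensitivity of `k`-star counts.
For `k ≥ 1` and every pair of edge-neighboring insertion-only graph streams of length
`T` whose flattened graphs have maximum degree at most `D`, the ℓ₁ distance between the
increment sequences of the `k`-star counts is at most `2·C(D-1, k-1)`; moreover the
bound is attained, even by a pair of such streams of length `T = 1`. -/
theorem kstar_incremental_edge_sensitivity (k D : ℕ) (hk : 1 ≤ k) (hD : 1 ≤ D) :
    (∀ (T : ℕ) (S S' : GraphStream), S.Valid T → S'.Valid T →
      edgeNeighborStream T S S' →
      (∀ v, (S.flat T).degree v ≤ D) → (∀ v, (S'.flat T).degree v ≤ D) →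
      ∑ t ∈ Finset.Icc 1 T,
          |(((S.flat t).kstarCount k : ℤ) - ((S.flat (t - 1)).kstarCount k : ℤ))
            - (((S'.flat t).kstarCount k : ℤ)
                - ((S'.flat (t - 1)).kstarCount k : ℤ))|
        ≤ 2 * ((D - 1).choose (k - 1) : ℤ)) ∧
    (∃ S S' : GraphStream, S.Valid 1 ∧ S'.Valid 1 ∧ edgeNeighborStream 1 S S' ∧
      (∀ v, (S.flat 1).degree v ≤ D) ∧ (∀ v, (S'.flat 1).degree v ≤ D) ∧
      ∑ t ∈ Finset.Icc 1 1,
          |(((S.flat t).kstarCount k : ℤ) - ((S.flat (t - 1)).kstarCount k : ℤ))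
            - (((S'.flat t).kstarCount k : ℤ)
                - ((S'.flat (t - 1)).kstarCount k : ℤ))|
        = 2 * ((D - 1).choose (k - 1) : ℤ)) := by
  refine ⟨fun T S S' hS hS' h hdS hdS' =>
    GraphStream.incrementDist_kstarCount_le hS hS' h hk hdS hdS', ?_⟩
  open GraphStream in
  exact ⟨doubleStar D, (doubleStar D).removeEdge s(0, 1), doubleStar_valid D,
    (doubleStar_valid D).removeEdge _,
    Or.inl (Or.inl ⟨1, s(0, 1), center_mem_doubleStar_edges hD, rfl⟩), doubleStar_degree_le hD,
    fun v => (degree_flat_removeEdge_le _ _ _ v).trans (doubleStar_degree_le hD v),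
    incrementDist_kstarCount_doubleStar hD hk⟩
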